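/- arXiv:2508.00371 — 2 statements merged into one kernel-verified Lean document; each statement's English description precedes it below -/
import Mathlib

section
/- Let Θ ⊆ ℝ² be open, F : Θ → ℝ smooth with positive-definite Hessian G(θ) = (∂_i∂_jF(θ))_{i,j} for all θ, and α ∈ ℝ. Suppose g is a C¹ field of positive-definite symmetric 2×2 matrices on Θ that is compatible with the α-connection, i.e. ∂_k g_{ij} = Σ_m ( Γ^m_{ki} g_{mj} + Γ^m_{kj} g_{im} ) on Θ, where Γ^k_{ij} = ((1−α)/2) Σ_m (G^{−1})_{km} ∂_i∂_j∂_m F. If θ₀ ∈ Θ is a point at which the curvature tensor R^ℓ_{ijk} of the α-connection is nonzero, then g(θ₀) is conformal to the Hessian: there exists h > 0 with g(θ₀) = h · G(θ₀). -/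
open scoped BigOperators

/-- Partial derivative in the `i`-th coordinate direction. -/
noncomputable def pderiv' (d : ℕ) (i : Fin d) (f : (Fin d → ℝ) → ℝ) (θ : Fin d → ℝ) : ℝ :=
  fderiv ℝ f θ (Pi.single i 1)

/-- The Hessian matrix `G(θ) = (∂_i∂_j F(θ))`. -/
noncomputable def hessMat (d : ℕ) (F : (Fin d → ℝ) → ℝ) (θ : Fin d → ℝ) :
    Matrix (Fin d) (Fin d) ℝ :=
  Matrix.of fun i j => pderiv' d i (fun θ' => pderiv' d j F θ') θ

/-- Third partial derivatives `F_{ijm} = ∂_i∂_j∂_m F`. -/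
noncomputable def thirdDeriv (d : ℕ) (F : (Fin d → ℝ) → ℝ) (i j m : Fin d)
    (θ : Fin d → ℝ) : ℝ :=
  pderiv' d i (fun θ' => pderiv' d j (fun θ'' => pderiv' d m F θ'') θ') θ

/-- Christoffel symbols of the second kind of the α-connection in the Hessian setup. -/
noncomputable def hessChristoffel (d : ℕ) (α : ℝ) (F : (Fin d → ℝ) → ℝ) (k i j : Fin d)
    (θ : Fin d → ℝ) : ℝ :=
  ((1 - α) / 2) * ∑ m, (hessMat d F θ)⁻¹ k m * thirdDeriv d F i j m θ

/-- Curvature tensor of the α-connection. -/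
noncomputable def hessCurv (d : ℕ) (α : ℝ) (F : (Fin d → ℝ) → ℝ) (l i j k : Fin d)
    (θ : Fin d → ℝ) : ℝ :=
  pderiv' d i (hessChristoffel d α F l j k) θ - pderiv' d j (hessChristoffel d α F l i k) θ
    + ∑ m, (hessChristoffel d α F l i m θ * hessChristoffel d α F m j k θ
        - hessChristoffel d α F l j m θ * hessChristoffel d α F m i k θ)

namespace Stmt14

abbrev E2 := Fin 2 → ℝ

lemma cases2 : ∀ x : Fin 2, x = 0 ∨ x = 1 := by decide

noncomputable def π (i : Fin 2) : E2 →L[ℝ] ℝ := ContinuousLinearMap.proj i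

lemma clm_ext' (A B : E2 →L[ℝ] ℝ) (h : ∀ i, A (Pi.single i 1) = B (Pi.single i 1)) : A = B := by
  ext v
  have hv : v = ∑ i, (v i) • (Pi.single i 1 : Fin 2 → ℝ) := by
    ext j; simp [Pi.single_apply, Finset.sum_apply]
  rw [hv, map_sum, map_sum]
  simp only [map_smul, h]

lemma π_single (i j : Fin 2) : π i (Pi.single j 1) = if j = i then 1 else 0 := by
  simp [π, Pi.single_apply]; exact if_congr eq_comm rfl rfl

lemma pderiv'_congr {f g : E2 → ℝ} {U : Set E2} (hU : IsOpen U) {θ : E2} (hθ : θ ∈ U)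
    (h : ∀ x ∈ U, f x = g x) (i : Fin 2) : pderiv' 2 i f θ = pderiv' 2 i g θ := by
  unfold pderiv'
  rw [Filter.EventuallyEq.fderiv_eq (by filter_upwards [hU.mem_nhds hθ] using h)]

lemma pderiv'_add {f g : E2 → ℝ} {θ : E2} (hf : DifferentiableAt ℝ f θ)
    (hg : DifferentiableAt ℝ g θ) (i : Fin 2) :
    pderiv' 2 i (fun x => f x + g x) θ = pderiv' 2 i f θ + pderiv' 2 i g θ := by
  unfold pderiv'; rw [fderiv_fun_add hf hg]; rfl

lemma pderiv'_mul {f g : E2 → ℝ} {θ : E2} (hf : DifferentiableAt ℝ f θ)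
    (hg : DifferentiableAt ℝ g θ) (i : Fin 2) :
    pderiv' 2 i (fun x => f x * g x) θ = pderiv' 2 i f θ * g θ + f θ * pderiv' 2 i g θ := by
  unfold pderiv'; rw [fderiv_fun_mul hf hg]; simp; ring

lemma pderiv'_const_mul {f : E2 → ℝ} {θ : E2} (hf : DifferentiableAt ℝ f θ) (c : ℝ) (i : Fin 2) :
    pderiv' 2 i (fun x => c * f x) θ = c * pderiv' 2 i f θ := by
  unfold pderiv'; rw [fderiv_const_mul hf]; rfl

lemma pderiv'_zero (θ : E2) (i : Fin 2) : pderiv' 2 i (fun _ => (0:ℝ)) θ = 0 := by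
  unfold pderiv'; simp

lemma pderiv'_sum {θ : E2} (f : Fin 2 → E2 → ℝ) (h : ∀ a, DifferentiableAt ℝ (f a) θ)
    (i : Fin 2) :
    pderiv' 2 i (fun θ' => ∑ a, f a θ') θ = ∑ a, pderiv' 2 i (f a) θ := by
  unfold pderiv'
  rw [fderiv_fun_sum (fun a _ => h a)]
  simp

/-- Schwarz symmetry from a differentiable formula for the first derivatives. -/
lemma schwarz_formula {U : Set E2} (hU : IsOpen U) {θ₀ : E2} (hθ₀ : θ₀ ∈ U)
    {f P₀ P₁ : E2 → ℝ}
    (hdiff : ∀ θ ∈ U, DifferentiableAt ℝ f θ)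
    (hP : ∀ θ ∈ U, ∀ i, pderiv' 2 i f θ = (if i = 0 then P₀ θ else P₁ θ))
    (hP₀ : DifferentiableAt ℝ P₀ θ₀) (hP₁ : DifferentiableAt ℝ P₁ θ₀) :
    pderiv' 2 0 P₁ θ₀ = pderiv' 2 1 P₀ θ₀ := by
  set f' : E2 → (E2 →L[ℝ] ℝ) := fun θ => P₀ θ • π 0 + P₁ θ • π 1 with hf'
  have hfd : ∀ θ ∈ U, HasFDerivAt f (f' θ) θ := by
    intro θ hθ
    have h1 : fderiv ℝ f θ = f' θ := by
      apply clm_ext'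
      intro i
      have := hP θ hθ i
      unfold pderiv' at this
      rw [this]
      fin_cases i <;> simp [hf', π_single]
    exact h1 ▸ (hdiff θ hθ).hasFDerivAt
  set f'' : E2 →L[ℝ] E2 →L[ℝ] ℝ :=
    (fderiv ℝ P₀ θ₀).smulRight (π 0) + (fderiv ℝ P₁ θ₀).smulRight (π 1) with hf''
  have hf'd : HasFDerivAt f' f'' θ₀ :=
    (hP₀.hasFDerivAt.smul_const (π 0)).add (hP₁.hasFDerivAt.smul_const (π 1))
  have hsymm := second_derivative_symmetric_of_eventually
    (by filter_upwards [hU.mem_nhds hθ₀] using hfd) hf'd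
    (Pi.single 0 1) (Pi.single 1 1)
  have h01 : f'' (Pi.single 0 1) (Pi.single 1 1) = pderiv' 2 0 P₁ θ₀ := by
    simp [hf'', π_single, pderiv']
  have h10 : f'' (Pi.single 1 1) (Pi.single 0 1) = pderiv' 2 1 P₀ θ₀ := by
    simp [hf'', π_single, pderiv']
  rw [← h01, ← h10, hsymm]

/-- General curvature operator built from a family of Christoffel symbols. -/
noncomputable def Rcurv (Γ : Fin 2 → Fin 2 → Fin 2 → E2 → ℝ) (l i j k : Fin 2) (θ : E2) : ℝ :=
  pderiv' 2 i (Γ l j k) θ - pderiv' 2 j (Γ l i k) θ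
    + ∑ m, (Γ l i m θ * Γ m j k θ - Γ l j m θ * Γ m i k θ)

/-- Curvature obstruction identity for a pair of connections compatible with `g`. -/
lemma key {U : Set E2} {θ₀ : E2} (Γ Γ' : Fin 2 → Fin 2 → Fin 2 → E2 → ℝ)
    (g : E2 → Matrix (Fin 2) (Fin 2) ℝ) (hU : IsOpen U) (hθ₀ : θ₀ ∈ U)
    (hΓ : ∀ l i j, ∀ θ ∈ U, DifferentiableAt ℝ (Γ l i j) θ)
    (hΓ' : ∀ l i j, ∀ θ ∈ U, DifferentiableAt ℝ (Γ' l i j) θ)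
    (hg : ∀ i j, ∀ θ ∈ U, DifferentiableAt ℝ (fun θ' => g θ' i j) θ)
    (hcompat : ∀ θ ∈ U, ∀ i j c : Fin 2, pderiv' 2 c (fun θ' => g θ' i j) θ
      = ∑ m, (Γ m c i θ * g θ m j + Γ' m c j θ * g θ i m))
    (i j k l : Fin 2) :
    ∑ m, (Rcurv Γ m i j k θ₀ * g θ₀ m l + Rcurv Γ' m i j l θ₀ * g θ₀ k m) = 0 := by
  have main : ∀ k l : Fin 2,
      ∑ m, (Rcurv Γ m 0 1 k θ₀ * g θ₀ m l + Rcurv Γ' m 0 1 l θ₀ * g θ₀ k m) = 0 := by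
    intro k l
    set P : Fin 2 → E2 → ℝ := fun c θ => ∑ m, (Γ m c k θ * g θ m l + Γ' m c l θ * g θ k m)
      with hPdef
    have hS : pderiv' 2 0 (P 1) θ₀ = pderiv' 2 1 (P 0) θ₀ := by
      apply schwarz_formula hU hθ₀ (f := fun θ => g θ k l) (hg k l)
      · intro θ hθ c
        rw [hcompat θ hθ k l c]
        fin_cases c <;> simp [hPdef]
      · apply DifferentiableAt.fun_sum; intro m _
        exact ((hΓ m 0 k θ₀ hθ₀).mul (hg m l θ₀ hθ₀)).add ((hΓ' m 0 l θ₀ hθ₀).mul (hg k m θ₀ hθ₀))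
      · apply DifferentiableAt.fun_sum; intro m _
        exact ((hΓ m 1 k θ₀ hθ₀).mul (hg m l θ₀ hθ₀)).add ((hΓ' m 1 l θ₀ hθ₀).mul (hg k m θ₀ hθ₀))
    have hE : ∀ a c : Fin 2, pderiv' 2 a (P c) θ₀
        = ∑ m, (pderiv' 2 a (Γ m c k) θ₀ * g θ₀ m l
            + Γ m c k θ₀ * (∑ n, (Γ n a m θ₀ * g θ₀ n l + Γ' n a l θ₀ * g θ₀ m n))
            + pderiv' 2 a (Γ' m c l) θ₀ * g θ₀ k m
            + Γ' m c l θ₀ * (∑ n, (Γ n a k θ₀ * g θ₀ n m + Γ' n a m θ₀ * g θ₀ k n))) := by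
      intro a c
      rw [hPdef]
      rw [pderiv'_sum (fun m θ => Γ m c k θ * g θ m l + Γ' m c l θ * g θ k m) (fun m =>
        ((hΓ m c k θ₀ hθ₀).mul (hg m l θ₀ hθ₀)).add ((hΓ' m c l θ₀ hθ₀).mul (hg k m θ₀ hθ₀)))]
      apply Finset.sum_congr rfl
      intro m _
      rw [pderiv'_add ((hΓ m c k θ₀ hθ₀).fun_mul (hg m l θ₀ hθ₀))
            ((hΓ' m c l θ₀ hθ₀).fun_mul (hg k m θ₀ hθ₀)),
          pderiv'_mul (hΓ m c k θ₀ hθ₀) (hg m l θ₀ hθ₀),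
          pderiv'_mul (hΓ' m c l θ₀ hθ₀) (hg k m θ₀ hθ₀),
          hcompat θ₀ hθ₀ m l a, hcompat θ₀ hθ₀ k m a]
      ring
    have hE01 := hE 0 1
    have hE10 := hE 1 0
    rw [hE01, hE10] at hS
    simp only [Rcurv, Fin.sum_univ_two] at hS ⊢
    linear_combination hS
  rcases cases2 i with rfl|rfl <;> rcases cases2 j with rfl|rfl
  · simp only [Rcurv, Fin.sum_univ_two]; ring
  · exact main k l
  · have := main k l
    simp only [Rcurv, Fin.sum_univ_two] at this ⊢
    linear_combination -this
  · simp only [Rcurv, Fin.sum_univ_two]; ring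

lemma pderiv'_contDiffOn {f : E2 → ℝ} {s : Set E2} (hs : IsOpen s) (hf : ContDiffOn ℝ (⊤ : ℕ∞) f s)
    (i : Fin 2) : ContDiffOn ℝ (⊤ : ℕ∞) (pderiv' 2 i f) s := by
  unfold pderiv'
  exact (hf.fderiv_of_isOpen hs (by simp)).clm_apply contDiffOn_const

variable {Θ : Set E2} {F : E2 → ℝ}

lemma hessMat_contDiffOn (hΘ : IsOpen Θ) (hF : ContDiffOn ℝ (⊤ : ℕ∞) F Θ) (i j : Fin 2) :
    ContDiffOn ℝ (⊤ : ℕ∞) (fun θ => hessMat 2 F θ i j) Θ :=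
  pderiv'_contDiffOn hΘ (pderiv'_contDiffOn hΘ hF j) i

lemma thirdDeriv_contDiffOn (hΘ : IsOpen Θ) (hF : ContDiffOn ℝ (⊤ : ℕ∞) F Θ) (i j m : Fin 2) :
    ContDiffOn ℝ (⊤ : ℕ∞) (thirdDeriv 2 F i j m) Θ :=
  pderiv'_contDiffOn hΘ (pderiv'_contDiffOn hΘ (pderiv'_contDiffOn hΘ hF m) j) i

lemma det_ne (hpd : ∀ θ ∈ Θ, (hessMat 2 F θ).PosDef) {θ : E2} (hθ : θ ∈ Θ) :
    (hessMat 2 F θ).det ≠ 0 :=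
  ne_of_gt (hpd θ hθ).det_pos

lemma inv_contDiffOn (hΘ : IsOpen Θ) (hF : ContDiffOn ℝ (⊤ : ℕ∞) F Θ)
    (hpd : ∀ θ ∈ Θ, (hessMat 2 F θ).PosDef) (k m : Fin 2) :
    ContDiffOn ℝ (⊤ : ℕ∞) (fun θ => (hessMat 2 F θ)⁻¹ k m) Θ := by
  have hdet : ContDiffOn ℝ (⊤ : ℕ∞) (fun θ => (hessMat 2 F θ).det) Θ := by
    have := ((hessMat_contDiffOn hΘ hF 0 0).mul (hessMat_contDiffOn hΘ hF 1 1)).sub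
      ((hessMat_contDiffOn hΘ hF 0 1).mul (hessMat_contDiffOn hΘ hF 1 0))
    exact this.congr (fun θ _ => Matrix.det_fin_two _)
  have hadj : ContDiffOn ℝ (⊤ : ℕ∞) (fun θ => (hessMat 2 F θ).adjugate k m) Θ := by
    fin_cases k <;> fin_cases m
    · exact (hessMat_contDiffOn hΘ hF 1 1).congr
        (fun θ _ => by simp [Matrix.adjugate_fin_two])
    · exact ((hessMat_contDiffOn hΘ hF 0 1).neg).congr
        (fun θ _ => by simp [Matrix.adjugate_fin_two])
    · exact ((hessMat_contDiffOn hΘ hF 1 0).neg).congr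
        (fun θ _ => by simp [Matrix.adjugate_fin_two])
    · exact (hessMat_contDiffOn hΘ hF 0 0).congr
        (fun θ _ => by simp [Matrix.adjugate_fin_two])
  refine ((hdet.inv (fun θ hθ => det_ne hpd hθ)).mul hadj).congr fun θ hθ => ?_
  rw [Matrix.inv_def]; simp [Ring.inverse_eq_inv']

/-- The reduced Christoffel symbol `Λ = G⁻¹ ∂³F` (the `α = -1` Christoffel symbol). -/
noncomputable def SΛ (F : E2 → ℝ) (l i j : Fin 2) (θ : E2) : ℝ :=
  ∑ m, (hessMat 2 F θ)⁻¹ l m * thirdDeriv 2 F i j m θ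

lemma SΛ_contDiffOn (hΘ : IsOpen Θ) (hF : ContDiffOn ℝ (⊤ : ℕ∞) F Θ)
    (hpd : ∀ θ ∈ Θ, (hessMat 2 F θ).PosDef) (l i j : Fin 2) :
    ContDiffOn ℝ (⊤ : ℕ∞) (SΛ F l i j) Θ :=
  ContDiffOn.sum fun m _ =>
    (inv_contDiffOn hΘ hF hpd l m).mul (thirdDeriv_contDiffOn hΘ hF i j m)

lemma hchris_eq (α : ℝ) (l i j : Fin 2) (θ : E2) :
    hessChristoffel 2 α F l i j θ = ((1 - α) / 2) * SΛ F l i j θ := rfl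

lemma christoffel_contDiffOn (hΘ : IsOpen Θ) (hF : ContDiffOn ℝ (⊤ : ℕ∞) F Θ)
    (hpd : ∀ θ ∈ Θ, (hessMat 2 F θ).PosDef) (α : ℝ) (l i j : Fin 2) :
    ContDiffOn ℝ (⊤ : ℕ∞) (hessChristoffel 2 α F l i j) Θ :=
  (contDiffOn_const.mul (SΛ_contDiffOn hΘ hF hpd l i j)).congr fun θ _ => hchris_eq α l i j θ

lemma dAt {f : E2 → ℝ} (hΘ : IsOpen Θ) (h : ContDiffOn ℝ (⊤ : ℕ∞) f Θ) {θ : E2} (hθ : θ ∈ Θ) :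
    DifferentiableAt ℝ f θ :=
  ((h.differentiableOn (by simp)).differentiableAt (hΘ.mem_nhds hθ))

lemma hID (hpd : ∀ θ ∈ Θ, (hessMat 2 F θ).PosDef) {θ : E2} (hθ : θ ∈ Θ) (a b : Fin 2) :
    ∑ m, hessMat 2 F θ a m * (hessMat 2 F θ)⁻¹ m b = if a = b then 1 else 0 := by
  have := Matrix.mul_nonsing_inv (hessMat 2 F θ)
    (isUnit_iff_ne_zero.2 (det_ne hpd hθ))
  have h2 := congrFun (congrFun this a) b
  rw [Matrix.mul_apply] at h2
  rw [h2, Matrix.one_apply]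

/-- Symmetry of the Hessian. -/
lemma hGsymm (hΘ : IsOpen Θ) (hF : ContDiffOn ℝ (⊤ : ℕ∞) F Θ) {θ : E2} (hθ : θ ∈ Θ) (i j : Fin 2) :
    hessMat 2 F θ i j = hessMat 2 F θ j i := by
  have h01 : pderiv' 2 0 (pderiv' 2 1 F) θ = pderiv' 2 1 (pderiv' 2 0 F) θ := by
    apply schwarz_formula hΘ hθ (f := F) (P₀ := pderiv' 2 0 F) (P₁ := pderiv' 2 1 F)
    · exact fun θ' hθ' => dAt hΘ hF hθ'
    · intro θ' hθ' c
      rcases cases2 c with rfl|rfl <;> simp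
    · exact dAt hΘ (pderiv'_contDiffOn hΘ hF 0) hθ
    · exact dAt hΘ (pderiv'_contDiffOn hΘ hF 1) hθ
  rcases cases2 i with rfl|rfl <;> rcases cases2 j with rfl|rfl
  · rfl
  · exact h01
  · exact h01.symm
  · rfl

/-- Symmetry of the third derivatives in the last two indices. -/
lemma hTsymm (hΘ : IsOpen Θ) (hF : ContDiffOn ℝ (⊤ : ℕ∞) F Θ) {θ : E2} (hθ : θ ∈ Θ) (c i j : Fin 2) :
    thirdDeriv 2 F c i j θ = thirdDeriv 2 F c j i θ := by
  show pderiv' 2 c (fun θ' => hessMat 2 F θ' i j) θ = pderiv' 2 c (fun θ' => hessMat 2 F θ' j i) θ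
  exact pderiv'_congr hΘ hθ (fun x hx => hGsymm hΘ hF hx i j) c

/-- First contraction identity: `∑ₘ (G⁻¹ x)ₘ G_{mj} = x_j` (uses symmetry of `G`). -/
lemma sumA (hΘ : IsOpen Θ) (hF : ContDiffOn ℝ (⊤ : ℕ∞) F Θ)
    (hpd : ∀ θ ∈ Θ, (hessMat 2 F θ).PosDef) {θ : E2} (hθ : θ ∈ Θ) (x : Fin 2 → ℝ) (j : Fin 2) :
    ∑ m, (∑ n, (hessMat 2 F θ)⁻¹ m n * x n) * hessMat 2 F θ m j = x j := by
  have e0 := hID hpd hθ j 0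
  have e1 := hID hpd hθ j 1
  have s0 : hessMat 2 F θ 0 j = hessMat 2 F θ j 0 := hGsymm hΘ hF hθ 0 j
  have s1 : hessMat 2 F θ 1 j = hessMat 2 F θ j 1 := hGsymm hΘ hF hθ 1 j
  simp only [Fin.sum_univ_two] at e0 e1 ⊢
  rcases cases2 j with rfl|rfl <;> norm_num at e0 e1 <;>
    linear_combination x 0 * e0 + x 1 * e1
      + ((hessMat 2 F θ)⁻¹ 0 0 * x 0 + (hessMat 2 F θ)⁻¹ 0 1 * x 1) * s0
      + ((hessMat 2 F θ)⁻¹ 1 0 * x 0 + (hessMat 2 F θ)⁻¹ 1 1 * x 1) * s1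

/-- Second contraction identity: `∑ₘ (G⁻¹ x)ₘ G_{im} = x_i`. -/
lemma sumB (hpd : ∀ θ ∈ Θ, (hessMat 2 F θ).PosDef) {θ : E2} (hθ : θ ∈ Θ)
    (x : Fin 2 → ℝ) (i : Fin 2) :
    ∑ m, (∑ n, (hessMat 2 F θ)⁻¹ m n * x n) * hessMat 2 F θ i m = x i := by
  have e0 := hID hpd hθ i 0
  have e1 := hID hpd hθ i 1
  simp only [Fin.sum_univ_two] at e0 e1 ⊢
  rcases cases2 i with rfl|rfl <;> norm_num at e0 e1 <;>
    linear_combination x 0 * e0 + x 1 * e1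

variable {Θ : Set E2} {F : E2 → ℝ}

/-- Duality: `G` is compatible with the pair `(Γ^α, Γ^{-α})`. -/
lemma compatG_dual (hΘ : IsOpen Θ) (hF : ContDiffOn ℝ (⊤ : ℕ∞) F Θ)
    (hpd : ∀ θ ∈ Θ, (hessMat 2 F θ).PosDef) (α : ℝ) :
    ∀ θ ∈ Θ, ∀ i j c : Fin 2, pderiv' 2 c (fun θ' => hessMat 2 F θ' i j) θ
      = ∑ m, (hessChristoffel 2 α F m c i θ * hessMat 2 F θ m j
          + hessChristoffel 2 (-α) F m c j θ * hessMat 2 F θ i m) := by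
  intro θ hθ i j c
  have hL : pderiv' 2 c (fun θ' => hessMat 2 F θ' i j) θ = thirdDeriv 2 F c i j θ := rfl
  have hA := sumA hΘ hF hpd hθ (fun n => thirdDeriv 2 F c i n θ) j
  have hB := sumB hpd hθ (fun n => thirdDeriv 2 F c j n θ) i
  have hsym := hTsymm hΘ hF hθ c i j
  rw [hL]
  simp only [hchris_eq, SΛ, Fin.sum_univ_two] at hA hB ⊢
  linear_combination (-(1 - α)/2) * hA - ((1 + α)/2) * hB + ((1 + α)/2) * hsym

/-- `G` is compatible with the pair `(0, Λ)` (dual flatness). -/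
lemma compatG_flat (hΘ : IsOpen Θ) (hF : ContDiffOn ℝ (⊤ : ℕ∞) F Θ)
    (hpd : ∀ θ ∈ Θ, (hessMat 2 F θ).PosDef) :
    ∀ θ ∈ Θ, ∀ i j c : Fin 2, pderiv' 2 c (fun θ' => hessMat 2 F θ' i j) θ
      = ∑ m, ((fun _ _ _ _ => (0:ℝ)) m c i θ * hessMat 2 F θ m j
          + hessChristoffel 2 (-1) F m c j θ * hessMat 2 F θ i m) := by
  intro θ hθ i j c
  have hL : pderiv' 2 c (fun θ' => hessMat 2 F θ' i j) θ = thirdDeriv 2 F c i j θ := rfl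
  have hB := sumB hpd hθ (fun n => thirdDeriv 2 F c j n θ) i
  have hsym := hTsymm hΘ hF hθ c i j
  rw [hL]
  simp only [hchris_eq, SΛ, Fin.sum_univ_two] at hB ⊢
  linear_combination -hB + hsym

lemma Rcurv_hess (α : ℝ) : Rcurv (hessChristoffel 2 α F) = hessCurv 2 α F := rfl

/-- The `α = -1` connection is flat. -/
lemma flatness (hΘ : IsOpen Θ) (hF : ContDiffOn ℝ (⊤ : ℕ∞) F Θ)
    (hpd : ∀ θ ∈ Θ, (hessMat 2 F θ).PosDef) {θ₀ : E2} (hθ₀ : θ₀ ∈ Θ)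
    (n i j k : Fin 2) : hessCurv 2 (-1) F n i j k θ₀ = 0 := by
  have hkey := key (fun _ _ _ _ => (0:ℝ)) (hessChristoffel 2 (-1) F)
    (fun θ => hessMat 2 F θ) hΘ hθ₀
    (fun _ _ _ _ _ => differentiableAt_const 0)
    (fun l i j θ hθ => dAt hΘ (christoffel_contDiffOn hΘ hF hpd (-1) l i j) hθ)
    (fun i j θ hθ => dAt hΘ (hessMat_contDiffOn hΘ hF i j) hθ)
    (compatG_flat hΘ hF hpd)
  have hz : ∀ m i j k : Fin 2, Rcurv (fun _ _ _ _ => (0:ℝ)) m i j k θ₀ = 0 := by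
    intro m i j k
    simp [Rcurv, pderiv'_zero]
  have e0 := hkey i j 0 k
  have e1 := hkey i j 1 k
  simp only [Rcurv_hess, Fin.sum_univ_two, hz, zero_mul, zero_add] at e0 e1
  -- e_c : R0 * G c 0 + R1 * G c 1 = 0
  have hdet := det_ne hpd hθ₀
  rw [Matrix.det_fin_two] at hdet
  set R0 := hessCurv 2 (-1) F 0 i j k θ₀
  set R1 := hessCurv 2 (-1) F 1 i j k θ₀
  have h0 : R0 * (hessMat 2 F θ₀ 0 0 * hessMat 2 F θ₀ 1 1
      - hessMat 2 F θ₀ 0 1 * hessMat 2 F θ₀ 1 0) = 0 := by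
    linear_combination hessMat 2 F θ₀ 1 1 * e0 - hessMat 2 F θ₀ 0 1 * e1
  have h1 : R1 * (hessMat 2 F θ₀ 0 0 * hessMat 2 F θ₀ 1 1
      - hessMat 2 F θ₀ 0 1 * hessMat 2 F θ₀ 1 0) = 0 := by
    linear_combination hessMat 2 F θ₀ 0 0 * e1 - hessMat 2 F θ₀ 1 0 * e0
  rcases cases2 n with rfl|rfl
  · rcases mul_eq_zero.1 h0 with h|h
    · exact h
    · exact absurd h hdet
  · rcases mul_eq_zero.1 h1 with h|h
    · exact h
    · exact absurd h hdet

/-- Structure of the curvature in terms of the reduced symbols. -/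
lemma curvStruct (hΘ : IsOpen Θ) (hF : ContDiffOn ℝ (⊤ : ℕ∞) F Θ)
    (hpd : ∀ θ ∈ Θ, (hessMat 2 F θ).PosDef) (α : ℝ) {θ₀ : E2} (hθ₀ : θ₀ ∈ Θ)
    (l i j k : Fin 2) :
    hessCurv 2 α F l i j k θ₀
      = ((1 - α)/2) * (pderiv' 2 i (SΛ F l j k) θ₀ - pderiv' 2 j (SΛ F l i k) θ₀)
        + ((1 - α)/2)^2 * ∑ m, (SΛ F l i m θ₀ * SΛ F m j k θ₀
            - SΛ F l j m θ₀ * SΛ F m i k θ₀) := by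
  have h1 : pderiv' 2 i (hessChristoffel 2 α F l j k) θ₀
      = ((1 - α)/2) * pderiv' 2 i (SΛ F l j k) θ₀ :=
    pderiv'_const_mul (dAt hΘ (SΛ_contDiffOn hΘ hF hpd l j k) hθ₀) _ i
  have h2 : pderiv' 2 j (hessChristoffel 2 α F l i k) θ₀
      = ((1 - α)/2) * pderiv' 2 j (SΛ F l i k) θ₀ :=
    pderiv'_const_mul (dAt hΘ (SΛ_contDiffOn hΘ hF hpd l i k) hθ₀) _ j
  simp only [hessCurv, h1, h2, hchris_eq, Fin.sum_univ_two]
  ring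

/-- The curvatures of the `α`- and `(-α)`-connections agree. -/
lemma Req (hΘ : IsOpen Θ) (hF : ContDiffOn ℝ (⊤ : ℕ∞) F Θ)
    (hpd : ∀ θ ∈ Θ, (hessMat 2 F θ).PosDef) (α : ℝ) {θ₀ : E2} (hθ₀ : θ₀ ∈ Θ)
    (l i j k : Fin 2) :
    hessCurv 2 (-α) F l i j k θ₀ = hessCurv 2 α F l i j k θ₀ := by
  have hm1 := flatness hΘ hF hpd hθ₀ l i j k
  rw [curvStruct hΘ hF hpd (-1) hθ₀ l i j k] at hm1
  rw [curvStruct hΘ hF hpd α hθ₀ l i j k, curvStruct hΘ hF hpd (-α) hθ₀ l i j k]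
  simp only [Fin.sum_univ_two] at hm1 ⊢
  linear_combination α * hm1

lemma posdef_diag {M : Matrix (Fin 2) (Fin 2) ℝ} (h : M.PosDef) (i : Fin 2) :
    0 < M i i := by
  exact h.diag_pos


end Stmt14

lemma final_algebra (B00 B01 B10 B11 a b c p q r : ℝ)
    (E1 : B00*a + B10*b = 0) (E2 : B01*b + B11*c = 0)
    (E3 : B00*b + B01*a + B10*c + B11*b = 0)
    (F1 : B00*p + B10*q = 0) (F2 : B01*q + B11*r = 0)
    (F3 : B00*q + B01*p + B10*r + B11*q = 0)
    (hdet : p*r - q*q ≠ 0) (hB : B00 ≠ 0 ∨ B01 ≠ 0 ∨ B10 ≠ 0 ∨ B11 ≠ 0)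
    (ha : 0 < a) (hp : 0 < p) :
    ∃ h : ℝ, 0 < h ∧ a = h*p ∧ b = h*q ∧ c = h*r := by
  have resolve : ∀ x : ℝ, x * (p*r - q*q) = 0 → x = 0 := by
    intro x hx
    rcases mul_eq_zero.1 hx with h|h
    · exact h
    · exact absurd h hdet
  have ht : B00*q + B10*r ≠ 0 := by
    intro h0
    have h4 : B01*p + B11*q = 0 := by linear_combination F3 - h0
    have z1 : B00 = 0 := resolve _ (by linear_combination r*F1 - q*h0)
    have z2 : B10 = 0 := resolve _ (by linear_combination p*h0 - q*F1)
    have z3 : B01 = 0 := resolve _ (by linear_combination r*h4 - q*F2)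
    have z4 : B11 = 0 := resolve _ (by linear_combination p*F2 - q*h4)
    rcases hB with h|h|h|h <;> [exact h z1; exact h z3; exact h z2; exact h z4]
  have hbd : (B00*B11 - B01*B10)*(p*r - q*q) = (B00*q + B10*r)*(B00*q + B10*r) := by
    linear_combination (B01*q + B11*r)*F1 - (B00*q + B10*r)*F3
  have hdb : B00*B11 - B01*B10 ≠ 0 := by
    intro h
    rw [h, zero_mul] at hbd
    exact ht (mul_self_eq_zero.1 hbd.symm)
  have resolveB : ∀ x : ℝ, (B00*B11 - B01*B10) * x = 0 → x = 0 := by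
    intro x hx
    rcases mul_eq_zero.1 hx with h|h
    · exact absurd h hdb
    · exact h
  set t := B00*q + B10*r with htdef
  set s := B00*b + B10*c with hsdef
  have eqA : B00*(t*a - s*p) + B10*(t*b - s*q) = 0 := by
    linear_combination t*E1 - s*F1
  have eqB : B01*(t*a - s*p) + B11*(t*b - s*q) = 0 := by
    linear_combination t*E3 - s*F3 + b*B11*htdef - q*B11*hsdef + a*B01*htdef - p*B01*hsdef
  have eqC : B00*(t*b - s*q) + B10*(t*c - s*r) = 0 := by
    linear_combination c*B10*htdef - r*B10*hsdef + b*B00*htdef - q*B00*hsdef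
  have eqD : B01*(t*b - s*q) + B11*(t*c - s*r) = 0 := by
    linear_combination t*E2 - s*F2
  have u1 : t*a - s*p = 0 := resolveB _ (by linear_combination B11*eqA - B10*eqB)
  have u2 : t*b - s*q = 0 := resolveB _ (by linear_combination B00*eqB - B01*eqA)
  have u3 : t*c - s*r = 0 := resolveB _ (by linear_combination B00*eqD - B01*eqC)
  refine ⟨s/t, ?_, ?_, ?_, ?_⟩
  · have hap : a = (s/t)*p := by field_simp; linear_combination u1
    by_contra hcon
    push_neg at hcon
    nlinarith [hap, ha, hp]
  · field_simp; linear_combination u1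
  · field_simp; linear_combination u2
  · field_simp; linear_combination u3

/-- In dimension 2, if a `C¹` field `g` of positive-definite symmetric matrices
is compatible with the α-connection of a smooth `F` with positive-definite Hessian, then at
any point `θ₀` where the curvature of the α-connection is nonzero, `g(θ₀)` is conformal to
the Hessian: `g(θ₀) = h · G(θ₀)` for some `h > 0`. -/
theorem stmt14 (Θ : Set (Fin 2 → ℝ)) (hΘ : IsOpen Θ)
    (F : (Fin 2 → ℝ) → ℝ) (hF : ContDiffOn ℝ (⊤ : ℕ∞) F Θ)
    (hpd : ∀ θ ∈ Θ, (hessMat 2 F θ).PosDef)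
    (α : ℝ)
    (g : (Fin 2 → ℝ) → Matrix (Fin 2) (Fin 2) ℝ)
    (hgC1 : ∀ i j, ContDiffOn ℝ 1 (fun θ => g θ i j) Θ)
    (hgpd : ∀ θ ∈ Θ, (g θ).PosDef)
    (hcompat : ∀ θ ∈ Θ, ∀ i j k : Fin 2,
      pderiv' 2 k (fun θ' => g θ' i j) θ
        = ∑ m, (hessChristoffel 2 α F m k i θ * g θ m j
            + hessChristoffel 2 α F m k j θ * g θ i m))
    (θ₀ : Fin 2 → ℝ) (hθ₀ : θ₀ ∈ Θ)
    (hR : ∃ l i j k : Fin 2, hessCurv 2 α F l i j k θ₀ ≠ 0) :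
    ∃ h : ℝ, 0 < h ∧ g θ₀ = h • hessMat 2 F θ₀ := by
  classical
  have hΓd : ∀ β : ℝ, ∀ l i j : Fin 2, ∀ θ ∈ Θ,
      DifferentiableAt ℝ (hessChristoffel 2 β F l i j) θ :=
    fun β l i j θ hθ => Stmt14.dAt hΘ (Stmt14.christoffel_contDiffOn hΘ hF hpd β l i j) hθ
  have hGd : ∀ i j : Fin 2, ∀ θ ∈ Θ, DifferentiableAt ℝ (fun θ' => hessMat 2 F θ' i j) θ :=
    fun i j θ hθ => Stmt14.dAt hΘ (Stmt14.hessMat_contDiffOn hΘ hF i j) hθ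
  have hgd : ∀ i j : Fin 2, ∀ θ ∈ Θ, DifferentiableAt ℝ (fun θ' => g θ' i j) θ :=
    fun i j θ hθ => ((hgC1 i j).differentiableOn one_ne_zero).differentiableAt (hΘ.mem_nhds hθ)
  -- curvature-compatibility identities for g and for G
  have keyg := Stmt14.key (hessChristoffel 2 α F) (hessChristoffel 2 α F) g hΘ hθ₀
    (hΓd α) (hΓd α) hgd (fun θ hθ i j c => hcompat θ hθ i j c)
  simp only [Stmt14.Rcurv_hess] at keyg
  have keyG := Stmt14.key (hessChristoffel 2 α F) (hessChristoffel 2 (-α) F)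
    (fun θ => hessMat 2 F θ) hΘ hθ₀ (hΓd α) (hΓd (-α)) hGd
    (Stmt14.compatG_dual hΘ hF hpd α)
  simp only [Stmt14.Rcurv_hess] at keyG
  have CG : ∀ k l : Fin 2,
      ∑ m, (hessCurv 2 α F m 0 1 k θ₀ * hessMat 2 F θ₀ m l
        + hessCurv 2 α F m 0 1 l θ₀ * hessMat 2 F θ₀ k m) = 0 := by
    intro k l
    have h := keyG 0 1 k l
    simp only [Fin.sum_univ_two] at h ⊢
    rw [Stmt14.Req hΘ hF hpd α hθ₀ 0 0 1 l, Stmt14.Req hΘ hF hpd α hθ₀ 1 0 1 l] at h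
    exact h
  -- a nonzero curvature component with (i,j) = (0,1)
  have hzero : ∀ l i k : Fin 2, hessCurv 2 α F l i i k θ₀ = 0 := by
    intro l i k
    simp only [hessCurv, Fin.sum_univ_two]; ring
  have hanti : ∀ l k : Fin 2, hessCurv 2 α F l 1 0 k θ₀ = -hessCurv 2 α F l 0 1 k θ₀ := by
    intro l k
    simp only [hessCurv, Fin.sum_univ_two]; ring
  obtain ⟨l₀, i₀, j₀, k₀, hne⟩ := hR
  have hBne : ∃ l k : Fin 2, hessCurv 2 α F l 0 1 k θ₀ ≠ 0 := by
    rcases Stmt14.cases2 i₀ with rfl|rfl <;> rcases Stmt14.cases2 j₀ with rfl|rfl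
    · exact absurd (hzero l₀ 0 k₀) hne
    · exact ⟨l₀, k₀, hne⟩
    · exact ⟨l₀, k₀, fun h => hne (by rw [hanti, h, neg_zero])⟩
    · exact absurd (hzero l₀ 1 k₀) hne
  obtain ⟨lB, kB, hBnz⟩ := hBne
  -- symmetry of g and G at θ₀
  have gsym : g θ₀ 1 0 = g θ₀ 0 1 := by
    have := (hgpd θ₀ hθ₀).1.apply 0 1
    simpa using this
  have Gsym : hessMat 2 F θ₀ 1 0 = hessMat 2 F θ₀ 0 1 := Stmt14.hGsymm hΘ hF hθ₀ 1 0
  -- the six scalar equations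
  have E1 : hessCurv 2 α F 0 0 1 0 θ₀ * g θ₀ 0 0 + hessCurv 2 α F 1 0 1 0 θ₀ * g θ₀ 0 1 = 0 := by
    have h := keyg 0 1 0 0
    simp only [Fin.sum_univ_two] at h
    linear_combination h/2 - hessCurv 2 α F 1 0 1 0 θ₀/2 * gsym
  have E2 : hessCurv 2 α F 0 0 1 1 θ₀ * g θ₀ 0 1 + hessCurv 2 α F 1 0 1 1 θ₀ * g θ₀ 1 1 = 0 := by
    have h := keyg 0 1 1 1
    simp only [Fin.sum_univ_two] at h
    linear_combination h/2 - hessCurv 2 α F 0 0 1 1 θ₀/2 * gsym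
  have E3 : hessCurv 2 α F 0 0 1 0 θ₀ * g θ₀ 0 1 + hessCurv 2 α F 0 0 1 1 θ₀ * g θ₀ 0 0
      + hessCurv 2 α F 1 0 1 0 θ₀ * g θ₀ 1 1 + hessCurv 2 α F 1 0 1 1 θ₀ * g θ₀ 0 1 = 0 := by
    have h := keyg 0 1 0 1
    simp only [Fin.sum_univ_two] at h
    linear_combination h
  have F1 : hessCurv 2 α F 0 0 1 0 θ₀ * hessMat 2 F θ₀ 0 0
      + hessCurv 2 α F 1 0 1 0 θ₀ * hessMat 2 F θ₀ 0 1 = 0 := by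
    have h := CG 0 0
    simp only [Fin.sum_univ_two] at h
    linear_combination h/2 - hessCurv 2 α F 1 0 1 0 θ₀/2 * Gsym
  have F2 : hessCurv 2 α F 0 0 1 1 θ₀ * hessMat 2 F θ₀ 0 1
      + hessCurv 2 α F 1 0 1 1 θ₀ * hessMat 2 F θ₀ 1 1 = 0 := by
    have h := CG 1 1
    simp only [Fin.sum_univ_two] at h
    linear_combination h/2 - hessCurv 2 α F 0 0 1 1 θ₀/2 * Gsym
  have F3 : hessCurv 2 α F 0 0 1 0 θ₀ * hessMat 2 F θ₀ 0 1
      + hessCurv 2 α F 0 0 1 1 θ₀ * hessMat 2 F θ₀ 0 0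
      + hessCurv 2 α F 1 0 1 0 θ₀ * hessMat 2 F θ₀ 1 1
      + hessCurv 2 α F 1 0 1 1 θ₀ * hessMat 2 F θ₀ 0 1 = 0 := by
    have h := CG 0 1
    simp only [Fin.sum_univ_two] at h
    linear_combination h
  have hdet2 : hessMat 2 F θ₀ 0 0 * hessMat 2 F θ₀ 1 1
      - hessMat 2 F θ₀ 0 1 * hessMat 2 F θ₀ 0 1 ≠ 0 := by
    have h3 := Stmt14.det_ne hpd hθ₀
    rw [Matrix.det_fin_two, Gsym] at h3
    exact h3
  have hB : hessCurv 2 α F 0 0 1 0 θ₀ ≠ 0 ∨ hessCurv 2 α F 0 0 1 1 θ₀ ≠ 0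
      ∨ hessCurv 2 α F 1 0 1 0 θ₀ ≠ 0 ∨ hessCurv 2 α F 1 0 1 1 θ₀ ≠ 0 := by
    rcases Stmt14.cases2 lB with rfl|rfl <;> rcases Stmt14.cases2 kB with rfl|rfl
    · exact Or.inl hBnz
    · exact Or.inr (Or.inl hBnz)
    · exact Or.inr (Or.inr (Or.inl hBnz))
    · exact Or.inr (Or.inr (Or.inr hBnz))
  obtain ⟨h, hpos, ha, hb, hc⟩ := final_algebra
    (hessCurv 2 α F 0 0 1 0 θ₀) (hessCurv 2 α F 0 0 1 1 θ₀)
    (hessCurv 2 α F 1 0 1 0 θ₀) (hessCurv 2 α F 1 0 1 1 θ₀)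
    (g θ₀ 0 0) (g θ₀ 0 1) (g θ₀ 1 1)
    (hessMat 2 F θ₀ 0 0) (hessMat 2 F θ₀ 0 1) (hessMat 2 F θ₀ 1 1)
    E1 E2 E3 F1 F2 F3 hdet2 hB
    (Stmt14.posdef_diag (hgpd θ₀ hθ₀) 0) (Stmt14.posdef_diag (hpd θ₀ hθ₀) 0)
  refine ⟨h, hpos, ?_⟩
  ext i j
  rcases Stmt14.cases2 i with rfl|rfl <;> rcases Stmt14.cases2 j with rfl|rfl <;>
    simp only [Matrix.smul_apply, smul_eq_mul]
  · exact ha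
  · exact hb
  · rw [gsym, Gsym]; exact hb
  · exact hc
end

section
/- Let α ∈ ℝ, α ≠ 1, and set β = 2/(1−α). Let X be a compact topological space with a nonzero finite Borel measure λ, let f, ξ : X → ℝ be continuous, let I ⊆ ℝ be an interval containing 0, and let τ : I → ℝ be twice continuously differentiable with τ(0) = 0, τ'(0) = 1, satisfying f(x) + τ(t) ξ(x) > 0 for all (t,x) ∈ I × X and the ODE τ''(t) = 2 · ( ∫_X (f + τ(t)ξ)^{β−1} ξ dλ / ∫_X (f + τ(t)ξ)^{β} dλ ) · τ'(t)². Define γ : I × X → (0,∞) by γ(t,x) = (2/|1−α|) · ( f(x) + τ(t)ξ(x) ) / ( ∫_X (f + τ(t)ξ)^{β} dλ )^{1/β}. Then: (i) ∫_X γ(t,·)^{β} dλ = (2/|1−α|)^{β} for every t ∈ I; and (ii) there exists a function c : I → ℝ such that ∂_t² γ(t,x) = c(t) · γ(t,x) for all (t,x) ∈ I × X. That is, γ is a geodesic of the connection on the constraint surface S_α = { f > 0 : ∫ f^{β} dλ = (2/|1−α|)^{β} } obtained by projecting the trivial connection radially (along the span of the footpoint). -/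
/-!
Write `N s = ∫ (f + s ξ)^β` and `g t = N (τ t)^(-1/β)`, so that
`γ t = (2/|1-α|) (f + τ t ξ) g t` and part (i) is just the normalisation. Differentiating
under the integral gives `N' = β M` with `M s = ∫ (f + s ξ)^(β-1) ξ`, hence
`g' = -(M/N)(τ) τ' g`. The acceleration of `γ` is proportional to
`(τ'' g + 2 τ' g') ξ + g'' (f + τ ξ)`, and the ODE for `τ` says exactly that the
`ξ`-component `τ'' g + 2 τ' g'` vanishes, so `∂_t² γ = (g''/g) γ`.
-/

open MeasureTheory Topology Set Metric

lemma integral_rpow_div_rpow_integral_inv {Ω : Type*} [MeasurableSpace Ω] (μ : Measure Ω)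
    {h : Ω → ℝ} (hh : ∀ x, 0 ≤ h x) {b C : ℝ} (hb : b ≠ 0) (hC : 0 ≤ C)
    (hA : ∫ x, h x ^ b ∂μ ≠ 0) :
    ∫ x, (C * h x / (∫ y, h y ^ b ∂μ) ^ b⁻¹) ^ b ∂μ = C ^ b := by
  set A := ∫ y, h y ^ b ∂μ
  have hA0 : 0 ≤ A := integral_nonneg fun x => Real.rpow_nonneg (hh x) b
  have hpt : ∀ x, (C * h x / A ^ b⁻¹) ^ b = C ^ b / A * h x ^ b := fun x => by
    rw [Real.div_rpow (mul_nonneg hC (hh x)) (Real.rpow_nonneg hA0 _),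
      Real.mul_rpow hC (hh x), Real.rpow_inv_rpow hA0 hb]
    ring
  simp_rw [hpt]
  rw [integral_const_mul, div_mul_cancel₀ _ hA]

section CompactSpace

variable {X : Type*} [TopologicalSpace X] [CompactSpace X]

lemma eventually_forall_pos_of_continuous {Y : Type*} [TopologicalSpace Y] {G : Y → X → ℝ}
    (hG : Continuous (Function.uncurry G)) {y₀ : Y} (h : ∀ x, 0 < G y₀ x) :
    ∀ᶠ y in 𝓝 y₀, ∀ x, 0 < G y x := by
  have := isCompact_univ.eventually_forall_of_forall_eventually (P := fun y x => 0 < G y x)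
    fun x _ => continuousAt_const.eventually_lt hG.continuousAt (h x)
  simpa using this

variable [MeasurableSpace X] [BorelSpace X] (μ : Measure X) [IsFiniteMeasure μ]

lemma integral_pos_of_continuous_of_pos (hμ : μ ≠ 0) {h : X → ℝ} (hh : Continuous h)
    (hpos : ∀ x, 0 < h x) : 0 < ∫ x, h x ∂μ := by
  rw [integral_pos_iff_support_of_nonneg (fun x => (hpos x).le)
      (hh.integrable_of_hasCompactSupport (.of_compactSpace h)),
    Function.support_eq_univ fun x => (hpos x).ne', Measure.measure_univ_pos]
  exact hμ

lemma hasDerivAt_integral_of_continuousOn {F F' : ℝ → X → ℝ} {U : Set ℝ} {s₀ : ℝ}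
    (hU : U ∈ 𝓝 s₀) (hF : ∀ s ∈ U, Continuous (F s))
    (hF' : ContinuousOn (Function.uncurry F') (U ×ˢ univ))
    (hderiv : ∀ s ∈ U, ∀ x, HasDerivAt (F · x) (F' s x) s) :
    HasDerivAt (fun s => ∫ x, F s x ∂μ) (∫ x, F' s₀ x ∂μ) s₀ := by
  obtain ⟨ε, hε, hεU⟩ := nhds_basis_closedBall.mem_iff.mp hU
  obtain ⟨C, hC⟩ := ((isCompact_closedBall s₀ ε).prod isCompact_univ)
    |>.exists_bound_of_continuousOn (hF'.mono (prod_mono hεU subset_rfl))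
  have hs₀ : s₀ ∈ U := mem_of_mem_nhds hU
  have hF's₀ : Continuous (F' s₀) :=
    hF'.comp_continuous (continuous_const.prodMk continuous_id) fun x => ⟨hs₀, mem_univ x⟩
  refine (hasDerivAt_integral_of_dominated_loc_of_deriv_le (bound := fun _ => C)
    (closedBall_mem_nhds s₀ hε) ?_
    ((hF s₀ hs₀).integrable_of_hasCompactSupport (.of_compactSpace _)) hF's₀.aestronglyMeasurable
    ?_ (integrable_const C) ?_).2
  · filter_upwards [hU] with s hs using (hF s hs).aestronglyMeasurable
  · exact .of_forall fun x s hs => hC (s, x) ⟨hs, mem_univ x⟩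
  · exact .of_forall fun x s hs => hderiv s (hεU hs) x

lemma hasDerivAt_integral_rpow_add_mul {f ξ w : X → ℝ} (hf : Continuous f) (hξ : Continuous ξ)
    (hw : Continuous w) (r : ℝ) {s₀ : ℝ} (hs₀ : ∀ x, 0 < f x + s₀ * ξ x) :
    HasDerivAt (fun s => ∫ x, (f x + s * ξ x) ^ r * w x ∂μ)
      (r * ∫ x, (f x + s₀ * ξ x) ^ (r - 1) * ξ x * w x ∂μ) s₀ := by
  have hbase : Continuous fun p : ℝ × X => f p.2 + p.1 * ξ p.2 := by fun_prop
  have hU : {s | ∀ x, 0 < f x + s * ξ x} ∈ 𝓝 s₀ :=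
    eventually_forall_pos_of_continuous (G := fun s x => f x + s * ξ x) hbase hs₀
  rw [← integral_const_mul]
  refine hasDerivAt_integral_of_continuousOn μ (F := fun s x => (f x + s * ξ x) ^ r * w x)
    (F' := fun s x => r * ((f x + s * ξ x) ^ (r - 1) * ξ x * w x)) hU
    (fun s hs => ((hf.add (continuous_const.mul hξ)).rpow_const fun x => .inl (hs x).ne').mul hw)
    ?_ fun s hs x => ?_
  · have hpow := hbase.continuousOn.rpow_const (p := r - 1)
      (s := {s | ∀ x, 0 < f x + s * ξ x} ×ˢ univ) fun p hp => .inl (hp.1 p.2).ne'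
    exact continuousOn_const.mul ((hpow.mul (hξ.comp continuous_snd).continuousOn).mul
      (hw.comp continuous_snd).continuousOn)
  · have hlin : HasDerivAt (fun s => f x + s * ξ x) (ξ x) s := by
      simpa using ((hasDerivAt_id s).mul_const (ξ x)).const_add (f x)
    refine ((hlin.rpow_const (p := r) (.inl (hs x).ne')).mul_const (w x)).congr_deriv ?_
    ring

end CompactSpace

lemma hasDerivWithinAt_deriv_line_mul {τ τ' g g' : ℝ → ℝ} {τ'' g'' : ℝ} {s : Set ℝ} {t : ℝ}
    (a b : ℝ) (hτ : HasDerivWithinAt τ (τ' t) s t) (hτ' : HasDerivWithinAt τ' τ'' s t)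
    (hg : HasDerivWithinAt g (g' t) s t) (hg' : HasDerivWithinAt g' g'' s t) (hg0 : g t ≠ 0)
    (hbal : τ'' * g t + 2 * τ' t * g' t = 0) :
    HasDerivWithinAt (fun u => τ' u * b * g u + (a + τ u * b) * g' u)
      (g'' / g t * ((a + τ t * b) * g t)) s t := by
  have hline : HasDerivWithinAt (fun u => a + τ u * b) (τ' t * b) s t := by
    simpa using (hτ.mul_const b).const_add a
  refine (((hτ'.mul_const b).mul hg).add (hline.mul hg')).congr_deriv ?_
  field_simp
  linear_combination b * hbal

lemma exists_hasDerivWithinAt_line_mul_rpow {N M τ τ' τ'' : ℝ → ℝ} {β : ℝ} {I : Set ℝ}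
    (hβ : β ≠ 0) (hN : ∀ t ∈ I, 0 < N (τ t))
    (hNderiv : ∀ t ∈ I, HasDerivAt N (β * M (τ t)) (τ t))
    (hMderiv : ∀ t ∈ I, DifferentiableAt ℝ M (τ t))
    (hτ : ∀ t ∈ I, HasDerivWithinAt τ (τ' t) I t) (hτ' : ∀ t ∈ I, HasDerivWithinAt τ' (τ'' t) I t)
    (hode : ∀ t ∈ I, τ'' t = 2 * (M (τ t) / N (τ t)) * τ' t ^ 2) :
    ∃ c : ℝ → ℝ, ∃ V : ℝ → ℝ → ℝ → ℝ, ∀ a b, ∀ t ∈ I,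
      HasDerivWithinAt (fun u => (a + τ u * b) * N (τ u) ^ (-β⁻¹)) (V a b t) I t ∧
      HasDerivWithinAt (V a b) (c t * ((a + τ t * b) * N (τ t) ^ (-β⁻¹))) I t := by
  set g : ℝ → ℝ := fun t => N (τ t) ^ (-β⁻¹)
  set g' : ℝ → ℝ := fun t => -(M (τ t) / N (τ t)) * τ' t * g t
  have hg : ∀ t ∈ I, HasDerivWithinAt g (g' t) I t := fun t ht => by
    refine (((hNderiv t ht).comp_hasDerivWithinAt t (hτ t ht)).rpow_const
      (.inl (hN t ht).ne')).congr_deriv ?_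
    show _ = -(M (τ t) / N (τ t)) * τ' t * N (τ t) ^ (-β⁻¹)
    rw [Function.comp_apply, Real.rpow_sub_one (hN t ht).ne']
    field_simp
  have hg' : ∀ t ∈ I, DifferentiableWithinAt ℝ g' I t := fun t ht =>
    have hNτ := (hNderiv t ht).differentiableAt.comp_differentiableWithinAt t
      (hτ t ht).differentiableWithinAt
    have hMτ := (hMderiv t ht).comp_differentiableWithinAt t (hτ t ht).differentiableWithinAt
    ((hMτ.div hNτ (hN t ht).ne').neg.mul (hτ' t ht).differentiableWithinAt).mul
      (hg t ht).differentiableWithinAt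
  refine ⟨fun t => derivWithin g' I t / g t, fun a b t => τ' t * b * g t + (a + τ t * b) * g' t,
    fun a b t ht => ⟨?_, ?_⟩⟩
  · have hline : HasDerivWithinAt (fun u => a + τ u * b) (τ' t * b) I t := by
      simpa using ((hτ t ht).mul_const b).const_add a
    exact hline.mul (hg t ht)
  · refine hasDerivWithinAt_deriv_line_mul a b (hτ t ht) (hτ' t ht) (hg t ht)
      (hg' t ht).hasDerivWithinAt (Real.rpow_pos_of_pos (hN t ht) _).ne' ?_
    show τ'' t * g t + 2 * τ' t * (-(M (τ t) / N (τ t)) * τ' t * g t) = 0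
    linear_combination g t * hode t ht

theorem stmt18_general (α : ℝ) (hα : α ≠ 1) {X : Type*} [TopologicalSpace X] [CompactSpace X]
    [MeasurableSpace X] [BorelSpace X]
    (lam : Measure X) [IsFiniteMeasure lam] (hlam : lam ≠ 0)
    (f ξ : X → ℝ) (hf : Continuous f) (hξ : Continuous ξ)
    (I : Set ℝ)
    (τ τ' τ'' : ℝ → ℝ)
    (hd1 : ∀ t ∈ I, HasDerivWithinAt τ (τ' t) I t)
    (hd2 : ∀ t ∈ I, HasDerivWithinAt τ' (τ'' t) I t)
    (hpos : ∀ t ∈ I, ∀ x : X, 0 < f x + τ t * ξ x)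
    (hode : ∀ t ∈ I,
      τ'' t = 2 * ((∫ x, (f x + τ t * ξ x) ^ (2 / (1 - α) - 1 : ℝ) * ξ x ∂lam)
          / (∫ x, (f x + τ t * ξ x) ^ (2 / (1 - α) : ℝ) ∂lam)) * (τ' t) ^ 2)
    (γ : ℝ → X → ℝ)
    (hγ : ∀ t x, γ t x = (2 / |1 - α|) * (f x + τ t * ξ x)
        / (∫ x', (f x' + τ t * ξ x') ^ (2 / (1 - α) : ℝ) ∂lam) ^ ((1 - α) / 2 : ℝ)) :
    (∀ t ∈ I, ∫ x, (γ t x) ^ (2 / (1 - α) : ℝ) ∂lam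
        = (2 / |1 - α|) ^ (2 / (1 - α) : ℝ)) ∧
    (∃ c : ℝ → ℝ, ∃ γ' : ℝ → X → ℝ,
      (∀ x : X, ∀ t ∈ I, HasDerivWithinAt (fun s => γ s x) (γ' t x) I t) ∧
      (∀ x : X, ∀ t ∈ I, HasDerivWithinAt (fun s => γ' s x) (c t * γ t x) I t)) := by
  set β := 2 / (1 - α)
  have hβ0 : β ≠ 0 := div_ne_zero two_ne_zero (sub_ne_zero.mpr hα.symm)
  have hβinv : (1 - α) / 2 = β⁻¹ := (inv_div _ _).symm
  set N : ℝ → ℝ := fun s => ∫ x, (f x + s * ξ x) ^ β ∂lam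
  set M : ℝ → ℝ := fun s => ∫ x, (f x + s * ξ x) ^ (β - 1) * ξ x ∂lam
  have hN : ∀ t ∈ I, 0 < N (τ t) := fun t ht =>
    integral_pos_of_continuous_of_pos lam hlam
      ((hf.add (continuous_const.mul hξ)).rpow_const fun x => .inl (hpos t ht x).ne')
      fun x => Real.rpow_pos_of_pos (hpos t ht x) β
  have hNderiv : ∀ t ∈ I, HasDerivAt N (β * M (τ t)) (τ t) := fun t ht => by
    simpa only [mul_one] using
      hasDerivAt_integral_rpow_add_mul lam (w := fun _ => 1) hf hξ continuous_const β (hpos t ht)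
  have hMderiv : ∀ t ∈ I, DifferentiableAt ℝ M (τ t) := fun t ht =>
    (hasDerivAt_integral_rpow_add_mul lam hf hξ hξ (β - 1) (hpos t ht)).differentiableAt
  have hγN : ∀ t ∈ I, ∀ x, γ t x = 2 / |1 - α| * ((f x + τ t * ξ x) * N (τ t) ^ (-β⁻¹)) :=
    fun t ht x => by rw [hγ, hβinv, Real.rpow_neg (hN t ht).le, div_eq_mul_inv, mul_assoc]
  obtain ⟨c, V, hV⟩ := exists_hasDerivWithinAt_line_mul_rpow hβ0 hN hNderiv hMderiv hd1 hd2 hode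
  refine ⟨fun t ht => ?_, c, fun t x => 2 / |1 - α| * V (f x) (ξ x) t, fun x t ht => ?_,
    fun x t ht => ?_⟩
  · simp_rw [hγ, hβinv]
    exact integral_rpow_div_rpow_integral_inv lam (fun x => (hpos t ht x).le) hβ0
      (by positivity) (hN t ht).ne'
  · exact ((hV _ _ t ht).1.const_mul _).congr (fun s hs => hγN s hs x) (hγN t ht x)
  · rw [hγN t ht x, mul_left_comm]
    exact (hV _ _ t ht).2.const_mul _

/-- Geodesics of the radially projected connection on the constraint surface
`S_α = {f > 0 : ∫ f^β dλ = (2/|1−α|)^β}` (`β = 2/(1−α)`, `α ≠ 1`) are radial projections of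
straight lines: if `τ` solves the stated scalar ODE with `τ(0) = 0`, `τ'(0) = 1`, then
`γ(t,x) = (2/|1−α|)(f(x)+τ(t)ξ(x)) / (∫ (f+τ(t)ξ)^β dλ)^{1/β}` satisfies
(i) `∫ γ(t,·)^β dλ = (2/|1−α|)^β` for all `t ∈ I`, and
(ii) `∂_t² γ(t,x) = c(t) γ(t,x)` for some scalar function `c`. -/
theorem stmt18 (α : ℝ) (hα : α ≠ 1) {X : Type*} [TopologicalSpace X] [CompactSpace X]
    [MeasurableSpace X] [BorelSpace X]
    (lam : Measure X) [IsFiniteMeasure lam] (hlam : lam ≠ 0)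
    (f ξ : X → ℝ) (hf : Continuous f) (hξ : Continuous ξ) (hfξ : f ≠ ξ)
    (I : Set ℝ) (hIc : I.OrdConnected) (h0 : (0 : ℝ) ∈ I)
    (τ τ' τ'' : ℝ → ℝ)
    (hτ0 : τ 0 = 0) (hτ'0 : τ' 0 = 1)
    (hd1 : ∀ t ∈ I, HasDerivWithinAt τ (τ' t) I t)
    (hd2 : ∀ t ∈ I, HasDerivWithinAt τ' (τ'' t) I t)
    (hcont : ContinuousOn τ'' I)
    (hpos : ∀ t ∈ I, ∀ x : X, 0 < f x + τ t * ξ x)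
    (hode : ∀ t ∈ I,
      τ'' t = 2 * ((∫ x, (f x + τ t * ξ x) ^ (2 / (1 - α) - 1 : ℝ) * ξ x ∂lam)
          / (∫ x, (f x + τ t * ξ x) ^ (2 / (1 - α) : ℝ) ∂lam)) * (τ' t) ^ 2)
    (γ : ℝ → X → ℝ)
    (hγ : ∀ t x, γ t x = (2 / |1 - α|) * (f x + τ t * ξ x)
        / (∫ x', (f x' + τ t * ξ x') ^ (2 / (1 - α) : ℝ) ∂lam) ^ ((1 - α) / 2 : ℝ)) :
    (∀ t ∈ I, ∫ x, (γ t x) ^ (2 / (1 - α) : ℝ) ∂lam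
        = (2 / |1 - α|) ^ (2 / (1 - α) : ℝ)) ∧
    (∃ c : ℝ → ℝ, ∃ γ' : ℝ → X → ℝ,
      (∀ x : X, ∀ t ∈ I, HasDerivWithinAt (fun s => γ s x) (γ' t x) I t) ∧
      (∀ x : X, ∀ t ∈ I, HasDerivWithinAt (fun s => γ' s x) (c t * γ t x) I t)) :=
  stmt18_general α hα lam hlam f ξ hf hξ I τ τ' τ'' hd1 hd2 hpos hode γ hγ
end
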